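/- Let X ⊆ κ be a stationary set and let CUB(X) = {η ∈ 2^κ : X \ η^{-1}{1} is non-stationary in κ}. Then CUB(X) does not have the Property of Baire: for every open U ⊆ 2^κ, the symmetric difference U Δ CUB(X) is not κ-meager. In particular, 2^κ \ CUB(X) is non-meager in every nonempty open set. -/

import Mathlib

open Set

universe u

namespace GDST

def KS (I : Type u) : Type u := I → I
def CS (I : Type u) : Type u := I → Bool

def kBasic {I : Type u} [LT I] (ζ : I → I) (β : I) : Set (KS I) :=
  {η : KS I | ∀ α : I, α < β → η α = ζ α}

def cBasic {I : Type u} [LT I] (ζ : I → Bool) (β : I) : Set (CS I) :=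
  {η : CS I | ∀ α : I, α < β → η α = ζ α}

instance kTop {I : Type u} [LT I] : TopologicalSpace (KS I) :=
  TopologicalSpace.generateFrom {U | ∃ ζ β, U = kBasic ζ β}

instance cTop {I : Type u} [LT I] : TopologicalSpace (CS I) :=
  TopologicalSpace.generateFrom {U | ∃ ζ β, U = cBasic ζ β}
/-- `C` is closed in `o`: every nonzero accumulation point of `C` below `o` lies in `C`. -/
def ClosedIn (C : Set Ordinal) (o : Ordinal) : Prop :=
  ∀ a : Ordinal, a < o → a ≠ 0 → (∀ b : Ordinal, b < a → ∃ c ∈ C, b < c ∧ c < a) → a ∈ C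

/-- `C` is unbounded in `o`. -/
def UnbIn (C : Set Ordinal) (o : Ordinal) : Prop :=
  ∀ a : Ordinal, a < o → ∃ b ∈ C, a < b ∧ b < o

/-- `C` is closed and unbounded (club) in `o`. -/
def ClubIn (C : Set Ordinal) (o : Ordinal) : Prop := ClosedIn C o ∧ UnbIn C o

/-- `S` is stationary in `o`: it meets every club subset of `o`. -/
def StatIn (S : Set Ordinal) (o : Ordinal) : Prop := ∀ C, ClubIn C o → (S ∩ C).Nonempty

/-- The ordinals `< κ`, our copy of the cardinal `κ` as an ordered set. -/
abbrev Sub (κ : Cardinal) : Type 1 := {o : Ordinal // o < κ.ord}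

/-- The subset of `κ` coded by `η ∈ 2^κ`. -/
def toSet (κ : Cardinal) (η : CS (Sub κ)) : Set Ordinal :=
  {o : Ordinal | ∃ h : o < κ.ord, η ⟨o, h⟩ = true}

/-- `CUB(X) = {η ∈ 2^κ : X \ η⁻¹{1} is non-stationary}`. -/
def CUBset (κ : Cardinal) (X : Set Ordinal) : Set (CS (Sub κ)) :=
  {η | ¬ StatIn (X \ toSet κ η) κ.ord}

/-!
Fix κ-many nowhere dense sets `A i`, a basic open set and a bit `b`. A fusion of length κ
produces a point of the basic open set outside every `A i` that takes the value `b` on a club: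
at stage `i` glue the earlier conditions (by regularity their bounds stay below κ), write `b` at
the glued bound, and extend the condition so as to avoid `A i`; the glued bounds form a club.
With `b = true` this gives a point of `CUB(X)` outside `⋃ i, A i`. With `b = false` it gives,
inside any nonempty open set, a point outside both `⋃ i, A i` and `CUB(X)`: as `cf κ > ω`, clubs
are closed under finite intersections, so `X ∩ C` is stationary, and it lies in `X` minus the set
coded by the point.
-/

section Cylinders

variable {I : Type u}

theorem isOpen_cBasic [LT I] (ζ : CS I) (β : I) : IsOpen (cBasic ζ β) :=
  TopologicalSpace.isOpen_generateFrom_of_mem ⟨ζ, β, rfl⟩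

theorem mem_cBasic_self [LT I] (ζ : CS I) (β : I) : ζ ∈ cBasic ζ β := fun _ _ => rfl

theorem cBasic_subset_cBasic [Preorder I] (ζ : CS I) {β β' : I} (h : β ≤ β') :
    cBasic ζ β' ⊆ cBasic ζ β :=
  fun _ hη α hα => hη α (hα.trans_le h)

theorem cBasic_eq_of_mem [LT I] {η ζ : CS I} {β : I} (h : η ∈ cBasic ζ β) :
    cBasic η β = cBasic ζ β := by
  ext τ
  exact forall₂_congr fun α hα => by rw [h α hα]

theorem isTopologicalBasis_cBasic [LinearOrder I] [Nonempty I] :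
    TopologicalSpace.IsTopologicalBasis {U : Set (CS I) | ∃ ζ β, U = cBasic ζ β} := by
  refine ⟨?_, ?_, rfl⟩
  · rintro _ ⟨ζ₁, β₁, rfl⟩ _ ⟨ζ₂, β₂, rfl⟩ η ⟨h₁, h₂⟩
    refine ⟨cBasic η (max β₁ β₂), ⟨η, _, rfl⟩, mem_cBasic_self η _, subset_inter ?_ ?_⟩
    · exact (cBasic_eq_of_mem h₁) ▸ cBasic_subset_cBasic η (le_max_left β₁ β₂)
    · exact (cBasic_eq_of_mem h₂) ▸ cBasic_subset_cBasic η (le_max_right β₁ β₂)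
  · inhabit I
    exact sUnion_eq_univ_iff.2 fun η => ⟨_, ⟨η, default, rfl⟩, mem_cBasic_self η default⟩

theorem exists_cBasic_disjoint_of_isNowhereDense [LinearOrder I] [Nonempty I]
    {A : Set (CS I)} (hA : IsNowhereDense A) (ζ : CS I) (β : I) :
    ∃ ζ' ∈ cBasic ζ β, ∃ β', β ≤ β' ∧ Disjoint (cBasic ζ' β') A := by
  have hnot : ¬ cBasic ζ β ⊆ closure A := fun h => by
    have := interior_maximal h (isOpen_cBasic ζ β)
    rw [hA] at this
    exact this (mem_cBasic_self ζ β)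
  obtain ⟨ζ', hζ', hζ'A⟩ := not_subset.1 hnot
  obtain ⟨_, ⟨ξ, γ, rfl⟩, hζ'ξ, hξA⟩ :=
    isTopologicalBasis_cBasic.exists_subset_of_mem_open hζ'A isClosed_closure.isOpen_compl
  refine ⟨ζ', hζ', max β γ, le_max_left β γ, disjoint_left.2 fun τ hτ hτA => ?_⟩
  have : τ ∈ cBasic ξ γ :=
    cBasic_eq_of_mem hζ'ξ ▸ cBasic_subset_cBasic ζ' (le_max_right β γ) hτ
  exact hξA this (subset_closure hτA)

end Cylinders

section Clubs

variable {o : Ordinal.{u}} {C D S : Set Ordinal.{u}}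

theorem ClosedIn.iSup_mem (hC : ClosedIn C o) {x : ℕ → Ordinal.{u}} (hxo : ⨆ n, x n < o)
    (hx : ∀ n, ∃ c ∈ C, x n < c ∧ c ≤ x (n + 1)) : ⨆ n, x n ∈ C := by
  have hle : ∀ n, x n ≤ ⨆ n, x n := Ordinal.le_iSup x
  have hlt : ∀ n, x n < ⨆ n, x n := fun n => by
    obtain ⟨c, -, hc, hc'⟩ := hx n
    exact (hc.trans_le hc').trans_le (hle _)
  refine hC _ hxo (hlt 0).ne_bot fun e he => ?_
  obtain ⟨n, hn⟩ := Ordinal.lt_iSup_iff.1 he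
  obtain ⟨c, hcC, hc, hc'⟩ := hx n
  exact ⟨c, hcC, hn.trans hc, hc'.trans_lt (hlt _)⟩

theorem ClubIn.inter (ho : Cardinal.aleph0 < o.cof) (hC : ClubIn C o) (hD : ClubIn D o) :
    ClubIn (C ∩ D) o := by
  refine ⟨fun a ha ha0 hacc => ⟨hC.1 a ha ha0 fun e he => ?_, hD.1 a ha ha0 fun e he => ?_⟩,
    fun a ha => ?_⟩
  · obtain ⟨c, hc, h⟩ := hacc e he
    exact ⟨c, hc.1, h⟩
  · obtain ⟨c, hc, h⟩ := hacc e he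
    exact ⟨c, hc.2, h⟩
  choose nC hnC using hC.2
  choose nD hnD using hD.2
  -- alternate between the two clubs: `y < nC y ∈ C` and `nC y < nD (nC y) ∈ D`
  let step : Iio o → Iio o := fun y =>
    ⟨nD (nC y y.2) (hnC y y.2).2.2, (hnD _ (hnC y y.2).2.2).2.2⟩
  have hstep : ∀ y : Iio o, ∃ c ∈ C, y.1 < c ∧ c < (step y).1 ∧ (step y).1 ∈ D :=
    fun y => ⟨_, (hnC y y.2).1, (hnC y y.2).2.1, (hnD _ _).2.1, (hnD _ _).1⟩
  let x : ℕ → Ordinal := fun n => (step^[n] ⟨a, ha⟩).1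
  have hx : ∀ n, x (n + 1) = (step (step^[n] ⟨a, ha⟩)).1 := fun n => by
    simp only [x, Function.iterate_succ_apply']
  have hxlt : ∀ n, x n < o := fun n => (step^[n] ⟨a, ha⟩).2
  have hxo : ⨆ n, x n < o := Ordinal.lift_iSup_lt_of_lt_cof (by simpa using ho) hxlt
  refine ⟨⨆ n, x n, ⟨hC.1.iSup_mem hxo fun n => ?_, hD.1.iSup_mem hxo fun n => ?_⟩, ?_, hxo⟩
  · obtain ⟨c, hcC, hlt, hlt', -⟩ := hstep (step^[n] ⟨a, ha⟩)
    exact ⟨c, hcC, hlt, hx n ▸ hlt'.le⟩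
  · obtain ⟨c, -, hlt, hlt', hD⟩ := hstep (step^[n] ⟨a, ha⟩)
    exact ⟨_, hD, hlt.trans hlt', (hx n).ge⟩
  · obtain ⟨c, -, hlt, hlt', -⟩ := hstep ⟨a, ha⟩
    exact ((hlt.trans hlt').trans_eq (hx 0).symm).trans_le (Ordinal.le_iSup x 1)

theorem StatIn.mono (hS : StatIn S o) {T : Set Ordinal} (h : S ⊆ T) : StatIn T o :=
  fun C hC => (hS C hC).mono (inter_subset_inter_left C h)

theorem StatIn.inter_clubIn (ho : Cardinal.aleph0 < o.cof) (hS : StatIn S o)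
    (hC : ClubIn C o) : StatIn (S ∩ C) o := fun D hD => by
  obtain ⟨x, hxS, hxC, hxD⟩ := hS (C ∩ D) (hC.inter ho hD)
  exact ⟨x, ⟨hxS, hxC⟩, hxD⟩

theorem clubIn_image_Iio (ho : Order.IsSuccLimit o) {f : Ordinal.{u} → Ordinal.{u}}
    (hmaps : MapsTo f (Iio o) (Iio o)) (hmono : StrictMonoOn f (Iio o))
    (hcont : ∀ i < o, Order.IsSuccLimit i → ∀ a < f i, ∃ j < i, a < f j) :
    ClubIn (f '' Iio o) o := by
  have hle : ∀ i < o, i ≤ f i := fun i hi =>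
    (show StrictMono hmaps.restrict from fun x y h => hmono x.2 y.2 h).le_apply (x := ⟨i, hi⟩)
  refine ⟨fun a ha ha0 hacc => ?_, fun a ha => ?_⟩
  · -- the least `i` with `a ≤ f i` is the preimage of `a`
    have hne : {i | i < o ∧ a ≤ f i}.Nonempty := ⟨a, ha, hle a ha⟩
    obtain ⟨hio, hai⟩ : sInf {i | i < o ∧ a ≤ f i} ∈ {i | i < o ∧ a ≤ f i} := csInf_mem hne
    set i := sInf {i | i < o ∧ a ≤ f i}
    have hmin : ∀ j < i, f j < a := fun j hj => not_le.1 fun h =>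
      (csInf_le' (show j ∈ {i | i < o ∧ a ≤ f i} from ⟨hj.trans hio, h⟩)).not_gt hj
    have hbelow : ∀ j < o, i ≤ j → ¬ f j < a := fun j hj hij hja =>
      (hai.trans (hmono.monotoneOn hio hj hij)).not_gt hja
    refine ⟨i, hio, (hai.antisymm (not_lt.1 fun hlt => ?_)).symm⟩
    rcases Ordinal.zero_or_succ_or_isSuccLimit i with h0 | ⟨k, hk⟩ | hlim
    · obtain ⟨_, ⟨j, hj, rfl⟩, -, hja⟩ := hacc 0 (pos_iff_ne_zero.2 ha0)
      exact hbelow j hj (h0 ▸ zero_le) hja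
    · have hki : k < i := hk ▸ Order.lt_succ k
      obtain ⟨_, ⟨j, hj, rfl⟩, hkj, hja⟩ := hacc (f k) (hmin k hki)
      have hkj : k < j := (hmono.lt_iff_lt (hki.trans hio) hj).1 hkj
      exact hbelow j hj (hk ▸ Order.succ_le_of_lt hkj) hja
    · obtain ⟨j, hj, hja⟩ := hcont i hio hlim a hlt
      exact (hmin j hj).not_gt hja
  · have hsucc : a + 1 < o := ho.succ_lt ha
    exact ⟨f (a + 1), ⟨a + 1, hsucc, rfl⟩, (lt_add_one a).trans_le (hle _ hsucc), hmaps hsucc⟩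

end Clubs

section Fusion

variable {κ : Cardinal.{0}}

def cyl (ζ : CS (Sub κ)) (β : Ordinal) : Set (CS (Sub κ)) :=
  {η | ∀ α : Sub κ, α.1 < β → η α = ζ α}

theorem cyl_subset_cyl (ζ : CS (Sub κ)) {β β' : Ordinal} (h : β ≤ β') : cyl ζ β' ⊆ cyl ζ β :=
  fun _ hη α hα => hη α (hα.trans_le h)

theorem cyl_eq_of_mem {η ζ : CS (Sub κ)} {β : Ordinal} (h : η ∈ cyl ζ β) :
    cyl η β = cyl ζ β := by
  ext τ
  exact forall₂_congr fun α hα => by rw [h α hα]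

variable (A : Sub κ → Set (CS (Sub κ))) (b : Bool)

structure IsStep (i : Ordinal) (ζ : CS (Sub κ)) (β : Ordinal) (p : CS (Sub κ) × Ordinal) :
    Prop where
  lt : β < p.2
  lt_ord : p.2 < κ.ord
  mem_cyl : p.1 ∈ cyl ζ β
  apply_eq : p.1 ⟨β, lt.trans lt_ord⟩ = b
  disjoint : ∀ hi : i < κ.ord, Disjoint (cyl p.1 p.2) (A ⟨i, hi⟩)

theorem exists_isStep (hκ : Cardinal.aleph0 ≤ κ) (hA : ∀ i, IsNowhereDense (A i))
    {i : Ordinal} (hi : i < κ.ord) (ζ : CS (Sub κ)) {β : Ordinal} (hβ : β < κ.ord) :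
    ∃ p, IsStep A b i ζ β p := by
  have hβ1 : β + 1 < κ.ord := (Cardinal.isSuccLimit_ord hκ).succ_lt hβ
  have : Nonempty (Sub κ) := ⟨⟨β, hβ⟩⟩
  obtain ⟨ζ', hζ', β', hβ', hdisj⟩ := exists_cBasic_disjoint_of_isNowhereDense (hA ⟨i, hi⟩)
    (Function.update ζ ⟨β, hβ⟩ b) ⟨β + 1, hβ1⟩
  refine ⟨(ζ', β'.1), (lt_add_one β).trans_le hβ', β'.2, fun α hα => ?_, ?_, fun _ => hdisj⟩
  · exact (hζ' α (hα.trans (lt_add_one β))).trans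
      (Function.update_of_ne (fun h => hα.ne (congrArg Subtype.val h)) _ _)
  · exact (hζ' _ (lt_add_one β)).trans (Function.update_self _ _ _)

open Classical in
noncomputable def step (i : Ordinal) (ζ : CS (Sub κ)) (β : Ordinal) : CS (Sub κ) × Ordinal :=
  if h : ∃ p, IsStep A b i ζ β p then h.choose else (ζ, β)

theorem isStep_step (hκ : Cardinal.aleph0 ≤ κ) (hA : ∀ i, IsNowhereDense (A i))
    {i : Ordinal} (hi : i < κ.ord) (ζ : CS (Sub κ)) {β : Ordinal} (hβ : β < κ.ord) :
    IsStep A b i ζ β (step A b i ζ β) := by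
  have h := exists_isStep A b hκ hA hi ζ hβ
  rw [step, dif_pos h]
  exact h.choose_spec

variable (ζ₀ : CS (Sub κ)) (β₀ : Ordinal.{0})

open Classical in
noncomputable def glue (i : Ordinal.{0}) (F : ∀ j < i, CS (Sub κ) × Ordinal) : CS (Sub κ) :=
  fun α => if h : ∃ j, ∃ hj : j < i, α.1 < (F j hj).2 then (F _ h.choose_spec.choose).1 α
    else ζ₀ α

noncomputable def bound (i : Ordinal.{0}) (F : ∀ j < i, CS (Sub κ) × Ordinal.{0}) : Ordinal.{0} :=
  max β₀ (⨆ j : Iio i, (F j j.2).2)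

theorem glue_zero (F : ∀ j < 0, CS (Sub κ) × Ordinal) : glue ζ₀ 0 F = ζ₀ :=
  funext fun _ => dif_neg fun ⟨_, hj, _⟩ => hj.not_ge zero_le

theorem le_bound {i : Ordinal} (F : ∀ j < i, CS (Sub κ) × Ordinal) {j : Ordinal} (hj : j < i) :
    (F j hj).2 ≤ bound β₀ i F :=
  le_max_of_le_right (Ordinal.le_iSup (fun j : Iio i => (F j j.2).2) ⟨j, hj⟩)

theorem bound_lt_ord (hreg : κ.IsRegular) {i : Ordinal} (hi : i < κ.ord) (hβ₀ : β₀ < κ.ord)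
    {F : ∀ j < i, CS (Sub κ) × Ordinal} (hF : ∀ j hj, (F j hj).2 < κ.ord) :
    bound β₀ i F < κ.ord := by
  refine max_lt hβ₀ (Ordinal.lift_iSup_lt_of_lt_cof ?_ fun j => hF j j.2)
  rwa [← Ordinal.lift_cof, hreg.cof_ord, Cardinal.mk_Iio_ordinal, Cardinal.lift_lift,
    Cardinal.lift_lt, ← Cardinal.lt_ord]

def Coherent (F : Ordinal.{0} → CS (Sub κ) × Ordinal.{0}) (i : Ordinal.{0}) : Prop :=
  ∀ k < i, ∀ j < k, (F k).1 ∈ cyl (F j).1 (F j).2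

theorem glue_mem_cyl {F : Ordinal → CS (Sub κ) × Ordinal} {i : Ordinal} (hF : Coherent F i)
    {j : Ordinal} (hj : j < i) : glue ζ₀ i (fun k _ => F k) ∈ cyl (F j).1 (F j).2 := by
  intro α hα
  have h : ∃ k, ∃ _ : k < i, α.1 < (F k).2 := ⟨j, hj, hα⟩
  simp only [glue, dif_pos h]
  obtain ⟨hk, hαk⟩ := h.choose_spec
  rcases lt_trichotomy h.choose j with hkj | hkj | hkj
  · exact (hF j hj _ hkj α hαk).symm
  · rw [hkj]
  · exact hF _ hk j hkj α hα

def IsFusionSeq (F : Ordinal.{0} → CS (Sub κ) × Ordinal.{0}) : Prop :=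
  ∀ i < κ.ord, IsStep A b i (glue ζ₀ i fun j _ => F j) (bound β₀ i fun j _ => F j) (F i)

theorem exists_isFusionSeq (hreg : κ.IsRegular) (hA : ∀ i, IsNowhereDense (A i))
    (hβ₀ : β₀ < κ.ord) : ∃ F, IsFusionSeq A b ζ₀ β₀ F := by
  refine ⟨Ordinal.lt_wf.fix fun i F => step A b i (glue ζ₀ i F) (bound β₀ i F), fun i => ?_⟩
  induction i using WellFoundedLT.induction with | ind i IH => ?_
  intro hi
  rw [Ordinal.lt_wf.fix_eq]
  exact isStep_step A b hreg.aleph0_le hA hi _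
    (bound_lt_ord β₀ hreg hi hβ₀ fun j hj => (IH j hj (hj.trans hi)).lt_ord)

variable {A b ζ₀ β₀} {F : Ordinal → CS (Sub κ) × Ordinal}

theorem IsFusionSeq.coherent (hF : IsFusionSeq A b ζ₀ β₀ F) :
    Coherent F κ.ord := by
  intro k
  induction k using WellFoundedLT.induction with | ind k IH => ?_
  intro hk j hj
  have hglue := glue_mem_cyl ζ₀ (fun k' hk' => IH k' hk' (hk'.trans hk)) hj
  rw [← cyl_eq_of_mem hglue]
  exact cyl_subset_cyl _ (le_bound β₀ (fun j _ => F j) hj) (hF k hk).mem_cyl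

theorem IsFusionSeq.clubIn_image_bound (hF : IsFusionSeq A b ζ₀ β₀ F) (hreg : κ.IsRegular) :
    ClubIn ((fun i => bound β₀ i fun j _ => F j) '' Iio κ.ord) κ.ord := by
  refine clubIn_image_Iio (Cardinal.isSuccLimit_ord hreg.aleph0_le)
    (fun i hi => (hF i hi).lt.trans (hF i hi).lt_ord)
    (fun j hj i _ hji => (hF j hj).lt.trans_le (le_bound β₀ _ hji)) fun i _ hlim a ha => ?_
  rcases lt_max_iff.1 ha with ha | ha
  · exact ⟨0, hlim.bot_lt, ha.trans_le (le_max_left _ _)⟩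
  · obtain ⟨⟨j, hj⟩, ha⟩ := Ordinal.lt_iSup_iff.1 ha
    exact ⟨j + 1, hlim.succ_lt hj, ha.trans_le (le_bound β₀ (fun j _ => F j) (lt_add_one j))⟩

end Fusion

theorem exists_mem_cBasic_const_on_clubIn {κ : Cardinal.{0}} (hreg : κ.IsRegular)
    {A : Sub κ → Set (CS (Sub κ))} (hA : ∀ i, IsNowhereDense (A i)) (b : Bool)
    (ζ₀ : CS (Sub κ)) (β₀ : Sub κ) :
    ∃ η ∈ cBasic ζ₀ β₀, η ∉ ⋃ i, A i ∧
      ∃ C, ClubIn C κ.ord ∧ ∀ c ∈ C, ∃ hc : c < κ.ord, η ⟨c, hc⟩ = b := by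
  obtain ⟨F, hF⟩ := exists_isFusionSeq A b ζ₀ β₀.1 hreg hA β₀.2
  -- gluing at stage `κ` gives the limit of the whole sequence
  set η := glue ζ₀ κ.ord fun j _ => F j
  have hη : ∀ i < κ.ord, η ∈ cyl (F i).1 (F i).2 := fun i hi =>
    glue_mem_cyl ζ₀ hF.coherent hi
  have h0 : (0 : Ordinal) < κ.ord := (Cardinal.isSuccLimit_ord hreg.aleph0_le).bot_lt
  refine ⟨η, ?_, ?_, _, hF.clubIn_image_bound hreg, ?_⟩
  · have h := cyl_subset_cyl _ (hF 0 h0).lt.le (hη 0 h0)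
    rw [cyl_eq_of_mem (hF 0 h0).mem_cyl, glue_zero] at h
    exact cyl_subset_cyl ζ₀ (le_max_left _ _) h
  · simp only [mem_iUnion, not_exists]
    exact fun i => disjoint_left.1 ((hF i.1 i.2).disjoint i.2) (hη i.1 i.2)
  · rintro _ ⟨i, hi, rfl⟩
    exact ⟨_, (hη i hi _ (hF i hi).lt).trans (hF i hi).apply_eq⟩

section CUB

variable {κ : Cardinal.{0}} {X : Set Ordinal} {η : CS (Sub κ)} {C : Set Ordinal}

theorem mem_CUBset_of_clubIn_subset (hC : ClubIn C κ.ord) (h : C ⊆ toSet κ η) :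
    η ∈ CUBset κ X := fun hX => by
  obtain ⟨x, ⟨-, hx⟩, hxC⟩ := hX C hC
  exact hx (h hxC)

theorem notMem_CUBset_of_clubIn_disjoint (hcof : Cardinal.aleph0 < κ.ord.cof)
    (hX : StatIn X κ.ord) (hC : ClubIn C κ.ord) (h : Disjoint C (toSet κ η)) :
    η ∉ CUBset κ X := fun hη =>
  hη <| (hX.inter_clubIn hcof hC).mono fun _ ⟨hxX, hxC⟩ => ⟨hxX, disjoint_left.1 h hxC⟩

theorem exists_mem_CUBset_notMem_iUnion (hreg : κ.IsRegular) {A : Sub κ → Set (CS (Sub κ))}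
    (hA : ∀ i, IsNowhereDense (A i)) : ∃ η ∈ CUBset κ X, η ∉ ⋃ i, A i := by
  have h0 : (0 : Ordinal) < κ.ord := (Cardinal.isSuccLimit_ord hreg.aleph0_le).bot_lt
  obtain ⟨η, -, hηA, C, hC, hCη⟩ :=
    exists_mem_cBasic_const_on_clubIn hreg hA true (fun _ => true) ⟨0, h0⟩
  exact ⟨η, mem_CUBset_of_clubIn_subset hC hCη, hηA⟩

theorem exists_mem_diff_CUBset_notMem_iUnion (hreg : κ.IsRegular)
    (hunc : Cardinal.aleph0 < κ) (hX : StatIn X κ.ord) {U : Set (CS (Sub κ))} (hU : IsOpen U)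
    (hne : U.Nonempty) {A : Sub κ → Set (CS (Sub κ))} (hA : ∀ i, IsNowhereDense (A i)) :
    ∃ η ∈ U \ CUBset κ X, η ∉ ⋃ i, A i := by
  have : Nonempty (Sub κ) := ⟨⟨0, (Cardinal.isSuccLimit_ord hreg.aleph0_le).bot_lt⟩⟩
  obtain ⟨η₀, hη₀⟩ := hne
  obtain ⟨_, ⟨ζ₀, β₀, rfl⟩, -, hβ₀⟩ := isTopologicalBasis_cBasic.exists_subset_of_mem_open hη₀ hU
  obtain ⟨η, hη, hηA, C, hC, hCη⟩ := exists_mem_cBasic_const_on_clubIn hreg hA false ζ₀ β₀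
  have hdisj : Disjoint C (toSet κ η) := disjoint_left.2 fun c hc ⟨_, htrue⟩ => by
    obtain ⟨_, hfalse⟩ := hCη c hc
    exact Bool.false_ne_true (hfalse.symm.trans htrue)
  exact ⟨η, ⟨hβ₀ hη, notMem_CUBset_of_clubIn_disjoint (hreg.cof_ord.symm ▸ hunc) hX hC hdisj⟩, hηA⟩

end CUB

theorem stmt13_general (κ : Cardinal) (hreg : κ.IsRegular) (hunc : Cardinal.aleph0 < κ)
    (X : Set Ordinal) (hX : StatIn X κ.ord) :
    (∀ U : Set (CS (Sub κ)), IsOpen U →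
      ¬ ∃ A : Sub κ → Set (CS (Sub κ)), (∀ i, interior (closure (A i)) = ∅) ∧
        symmDiff U (CUBset κ X) ⊆ ⋃ i, A i) ∧
    (∀ U : Set (CS (Sub κ)), IsOpen U → U.Nonempty →
      ¬ ∃ A : Sub κ → Set (CS (Sub κ)), (∀ i, interior (closure (A i)) = ∅) ∧
        (CUBset κ X)ᶜ ∩ U ⊆ ⋃ i, A i) := by
  refine ⟨fun U hU ⟨A, hA, hcov⟩ => ?_, fun U hU hne ⟨A, hA, hcov⟩ => ?_⟩
  · rcases U.eq_empty_or_nonempty with rfl | hne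
    · obtain ⟨η, hη, hηA⟩ := exists_mem_CUBset_notMem_iUnion (X := X) hreg hA
      exact hηA (hcov (Or.inr ⟨hη, notMem_empty η⟩))
    · obtain ⟨η, hη, hηA⟩ := exists_mem_diff_CUBset_notMem_iUnion hreg hunc hX hU hne hA
      exact hηA (hcov (Or.inl hη))
  · obtain ⟨η, ⟨hηU, hη⟩, hηA⟩ := exists_mem_diff_CUBset_notMem_iUnion hreg hunc hX hU hne hA
    exact hηA (hcov ⟨hη, hηU⟩)

/-- for stationary `X ⊆ κ`, the set `CUB(X)` does not have the Property of
Baire: for every open `U`, the symmetric difference `U Δ CUB(X)` is not κ-meager (not covered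
by κ-many nowhere dense sets); in particular the complement of `CUB(X)` is non-meager in
every nonempty open set. -/
theorem stmt13 (κ : Cardinal) (hreg : κ.IsRegular) (hunc : Cardinal.aleph0 < κ)
    (hpow : Cardinal.powerlt κ κ = κ)
    (X : Set Ordinal) (hXsub : X ⊆ Set.Iio κ.ord) (hX : StatIn X κ.ord) :
    (∀ U : Set (CS (Sub κ)), IsOpen U →
      ¬ ∃ A : Sub κ → Set (CS (Sub κ)), (∀ i, interior (closure (A i)) = ∅) ∧
        symmDiff U (CUBset κ X) ⊆ ⋃ i, A i) ∧
    (∀ U : Set (CS (Sub κ)), IsOpen U → U.Nonempty →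
      ¬ ∃ A : Sub κ → Set (CS (Sub κ)), (∀ i, interior (closure (A i)) = ∅) ∧
        (CUBset κ X)ᶜ ∩ U ⊆ ⋃ i, A i) :=
  stmt13_general κ hreg hunc X hX

end GDST
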